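/- An invertible element T of the Clifford algebra satisfies T C^{(1)} T^{-1} ⊆ C^{(1)} if and only if T ∈ Z^× (C^{×(0)} ∪ C^{×(1)}), i.e. T is (an invertible central element times) an even or odd invertible element. -/

import Mathlib

/-!
If conjugation by `T` preserves `C^{(1)}`, it also preserves `C^{(0)} = e_a C^{(1)}`, hence commutes
with the grade involution `α`. So `c = T⁻¹ α(T)` is central with `α(c) = c⁻¹`, and `c + c⁻¹` is
central and even. In a nondegenerate Clifford algebra such an element is a scalar `μ`: each map
`x ↦ e_a α(x) e_a⁻¹` fixes it, while averaging over these maps kills every word in the generators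
in which some letter occurs an odd number of times, and the remaining words are scalars.
Now `(1 ± c)(1 ± c⁻¹) = 2 ± μ`, so one of `1 ± c` is a central unit, and `T (1 ± c) = T ± α(T)` is
even or odd. Conversely, conjugation by a central unit is trivial and conjugation by a homogeneous
unit preserves the grading.
-/

open CliffordAlgebra

noncomputable section

variable {n : ℕ} (Q : QuadraticForm ℝ (Fin n → ℝ))

/-- The standard generators `e_a` of the Clifford algebra. -/
def egen (a : Fin n) : CliffordAlgebra Q := ι Q (Pi.single a 1)

/-- The ordered product of generators indexed by a finite set. -/
def eProd (s : Finset (Fin n)) : CliffordAlgebra Q :=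
  ((s.sort (· ≤ ·)).map (egen Q)).prod

/-- The grade-`k` subspace `C^k`, spanned by the products of `k` distinct generators. -/
def gradeSubmodule (k : ℕ) : Submodule ℝ (CliffordAlgebra Q) :=
  Submodule.span ℝ {x | ∃ s : Finset (Fin n), s.card = k ∧ x = eProd Q s}

/-- The set `Z^× (C^{×(0)} ∪ C^{×(1)})` : invertible central elements times
invertible even or odd elements. -/
def Pset : Set (CliffordAlgebra Q) :=
  {T | ∃ W T₀ : CliffordAlgebra Q,
    W ∈ Subalgebra.center ℝ (CliffordAlgebra Q) ∧ IsUnit W ∧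
    (T₀ ∈ evenOdd Q 0 ∨ T₀ ∈ evenOdd Q 1) ∧ IsUnit T₀ ∧ T = W * T₀}

/-- `Q` is diagonal with entries `±1` in the standard basis (an orthonormal-type basis,
expressing nondegeneracy of `Q`). -/
def DiagQ : Prop :=
  (∀ a, Q (Pi.single a 1) = 1 ∨ Q (Pi.single a 1) = -1) ∧
  (∀ a b : Fin n, a ≠ b → QuadraticMap.polar Q (Pi.single a 1) (Pi.single b 1) = 0)

section GradedRing

variable {ι A σ : Type*} [DecidableEq ι] [AddCommGroup ι] [Ring A] [SetLike σ A]
  [AddSubgroupClass σ A] (𝒜 : ι → σ) [GradedRing 𝒜]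

theorem inv_mem_graded_of_mem {u : Aˣ} {i : ι} (hu : ↑u ∈ 𝒜 i) : ↑u⁻¹ ∈ 𝒜 (-i) := by
  have h : ↑u * (DirectSum.decompose 𝒜 (↑u⁻¹ : A) (-i) : A) = 1 := by
    rw [← DirectSum.coe_decompose_mul_add_of_left_mem 𝒜 hu, add_neg_cancel, u.mul_inv,
      DirectSum.decompose_of_mem_same 𝒜 SetLike.GradedOne.one_mem]
  exact Units.eq_inv_of_mul_eq_one_left h ▸ SetLike.coe_mem _

theorem conj_mem_graded_of_mem {u : Aˣ} {i j : ι} (hu : ↑u ∈ 𝒜 i) {x : A} (hx : x ∈ 𝒜 j) :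
    ↑u * x * ↑u⁻¹ ∈ 𝒜 j := by
  simpa using SetLike.mul_mem_graded (SetLike.mul_mem_graded hu hx) (inv_mem_graded_of_mem 𝒜 hu)

end GradedRing

theorem inv_mul_mem_center_of_conj_eq {M : Type*} [Monoid M] {a b : Mˣ}
    (h : ∀ z : M, ↑a * z * ↑a⁻¹ = ↑b * z * ↑b⁻¹) : ↑(b⁻¹ * a) ∈ Set.center M :=
  Semigroup.mem_center_iff.mpr fun z => calc
    z * ↑(b⁻¹ * a) = ↑b⁻¹ * (↑b * z * ↑b⁻¹) * ↑a := by simp [mul_assoc]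
    _ = ↑b⁻¹ * (↑a * z * ↑a⁻¹) * ↑a := by rw [h]
    _ = ↑(b⁻¹ * a) * z := by simp [mul_assoc]

theorem isUnit_of_mul_eq_algebraMap {K A : Type*} [Field K] [Ring A] [Algebra K A] {x y : A}
    (hxy : Commute x y) {r : K} (hr : r ≠ 0) (h : x * y = algebraMap K A r) : IsUnit x :=
  (hxy.isUnit_mul_iff.mp (h ▸ hr.isUnit.map (algebraMap K A))).1

theorem eq_zero_of_add_self_eq_zero (R : Type*) {M : Type*} [Semiring R] [Invertible (2 : R)]
    [AddCommMonoid M] [Module R M] {x : M} (h : x + x = 0) : x = 0 := by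
  rw [← invOf_two_smul_add_invOf_two_smul R x, ← smul_add, h, smul_zero]

namespace CliffordAlgebra

variable {R M : Type*} [CommRing R] [AddCommGroup M] [Module R M] {Q : QuadraticForm R M}

theorem exists_evenOdd_add (x : CliffordAlgebra Q) :
    ∃ x₀ ∈ evenOdd Q 0, ∃ x₁ ∈ evenOdd Q 1, x₀ + x₁ = x :=
  Submodule.mem_sup.mp ((evenOdd_isCompl Q).sup_eq_top ▸ Submodule.mem_top)

theorem conj_mem_evenOdd_zero_of_conj_odd {g T : (CliffordAlgebra Q)ˣ} (hg : ↑g ∈ evenOdd Q 1)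
    (hT : ∀ U ∈ evenOdd Q 1, ↑T * U * ↑T⁻¹ ∈ evenOdd Q 1) {x : CliffordAlgebra Q}
    (hx : x ∈ evenOdd Q 0) : ↑T * x * ↑T⁻¹ ∈ evenOdd Q 0 := by
  have hgx : ↑g⁻¹ * x ∈ evenOdd Q 1 := by
    simpa using SetLike.mul_mem_graded (inv_mem_graded_of_mem (evenOdd Q) hg) hx
  have hsplit : ↑T * x * ↑T⁻¹ = (↑T * ↑g * ↑T⁻¹) * (↑T * (↑g⁻¹ * x) * ↑T⁻¹) := by
    simp [mul_assoc]
  rw [hsplit, ← show (1 + 1 : ZMod 2) = 0 by decide]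
  exact SetLike.mul_mem_graded (hT _ hg) (hT _ hgx)

theorem involute_conj {T : (CliffordAlgebra Q)ˣ}
    (h₀ : ∀ x ∈ evenOdd Q 0, ↑T * x * ↑T⁻¹ ∈ evenOdd Q 0)
    (h₁ : ∀ x ∈ evenOdd Q 1, ↑T * x * ↑T⁻¹ ∈ evenOdd Q 1) (x : CliffordAlgebra Q) :
    involute (↑T * x * ↑T⁻¹ : CliffordAlgebra Q) = ↑T * involute x * ↑T⁻¹ := by
  obtain ⟨x₀, hx₀, x₁, hx₁, rfl⟩ := exists_evenOdd_add x
  rw [mul_add, add_mul, map_add, map_add, involute_eq_of_mem_even (h₀ _ hx₀),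
    involute_eq_of_mem_odd (h₁ _ hx₁), involute_eq_of_mem_even hx₀, involute_eq_of_mem_odd hx₁,
    mul_add, add_mul, mul_neg, neg_mul]

variable [Invertible (2 : R)]

theorem mem_evenOdd_zero_iff {x : CliffordAlgebra Q} : x ∈ evenOdd Q 0 ↔ involute x = x := by
  refine ⟨involute_eq_of_mem_even, fun h => ?_⟩
  obtain ⟨x₀, h₀, x₁, h₁, rfl⟩ := exists_evenOdd_add x
  rw [map_add, involute_eq_of_mem_even h₀, involute_eq_of_mem_odd h₁, add_right_inj] at h
  rwa [eq_zero_of_add_self_eq_zero R (neg_eq_iff_add_eq_zero.mp h), add_zero]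

theorem mem_evenOdd_one_iff {x : CliffordAlgebra Q} : x ∈ evenOdd Q 1 ↔ involute x = -x := by
  refine ⟨involute_eq_of_mem_odd, fun h => ?_⟩
  obtain ⟨x₀, h₀, x₁, h₁, rfl⟩ := exists_evenOdd_add x
  rw [map_add, involute_eq_of_mem_even h₀, involute_eq_of_mem_odd h₁, neg_add, add_left_inj] at h
  rwa [eq_zero_of_add_self_eq_zero R (eq_neg_iff_add_eq_zero.mp h), zero_add]

end CliffordAlgebra

section CliffordWords

def eWord (L : List (Fin n)) : CliffordAlgebra Q := (L.map (egen Q)).prod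

@[simp] theorem eWord_nil : eWord Q [] = 1 := rfl

theorem eWord_cons (a : Fin n) (L : List (Fin n)) : eWord Q (a :: L) = egen Q a * eWord Q L :=
  List.prod_cons

theorem eWord_append (L₁ L₂ : List (Fin n)) : eWord Q (L₁ ++ L₂) = eWord Q L₁ * eWord Q L₂ := by
  simp [eWord]

theorem involute_eWord (L : List (Fin n)) :
    involute (eWord Q L) = (-1 : ℝ) ^ L.length • eWord Q L := by
  have h := involute_prod_map_ι (Q := Q) (L.map fun a => Pi.single a 1)
  simp only [List.map_map, List.length_map] at h
  exact h

theorem egen_mul_egen_self (a : Fin n) :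
    egen Q a * egen Q a = algebraMap ℝ _ (Q (Pi.single a 1)) :=
  ι_sq_scalar Q _

theorem ι_eq_sum_smul_egen (v : Fin n → ℝ) : ι Q v = ∑ a, v a • egen Q a := by
  conv_lhs => rw [← (Pi.basisFun ℝ (Fin n)).sum_repr v]
  simp [egen]

theorem span_range_eWord : Submodule.span ℝ (Set.range (eWord Q)) = ⊤ := by
  set S := Submodule.span ℝ (Set.range (eWord Q))
  have egen_mul_mem (a : Fin n) : S ≤ S.comap (LinearMap.mulLeft ℝ (egen Q a)) :=
    Submodule.span_le.mpr <| by
      rintro _ ⟨L, rfl⟩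
      exact Submodule.subset_span ⟨a :: L, eWord_cons Q a L⟩
  have mul_mem (x : CliffordAlgebra Q) : ∀ y ∈ S, x * y ∈ S := by
    induction x using CliffordAlgebra.induction with
    | algebraMap r => exact fun y hy => Algebra.smul_def r y ▸ S.smul_mem r hy
    | ι v =>
      intro y hy
      rw [ι_eq_sum_smul_egen, Finset.sum_mul]
      exact S.sum_mem fun a _ =>
        smul_mul_assoc (v a) (egen Q a) y ▸ S.smul_mem _ (egen_mul_mem a hy)
    | mul x₁ x₂ h₁ h₂ => exact fun y hy => (mul_assoc x₁ x₂ y).symm ▸ h₁ _ (h₂ y hy)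
    | add x₁ x₂ h₁ h₂ => exact fun y hy => (add_mul x₁ x₂ y).symm ▸ S.add_mem (h₁ y hy) (h₂ y hy)
  exact eq_top_iff.mpr fun x _ => mul_one x ▸ mul_mem x 1 (Submodule.subset_span ⟨[], rfl⟩)

variable {Q}

theorem DiagQ.apply_single_ne_zero (hQ : DiagQ Q) (a : Fin n) : Q (Pi.single a 1) ≠ 0 := by
  rcases hQ.1 a with h | h <;> simp [h]

theorem egen_mul_egen_of_ne (hQ : DiagQ Q) {a b : Fin n} (hab : a ≠ b) :
    egen Q a * egen Q b = -(egen Q b * egen Q a) := by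
  rw [eq_neg_iff_add_eq_zero]
  simpa [egen, hQ.2 a b hab] using ι_mul_ι_add_swap (Q := Q) (Pi.single a 1) (Pi.single b 1)

theorem egen_mul_eWord (hQ : DiagQ Q) (a : Fin n) (L : List (Fin n)) :
    egen Q a * eWord Q L = (-1 : ℝ) ^ (L.length + L.count a) • (eWord Q L * egen Q a) := by
  induction L with
  | nil => simp
  | cons b L ih =>
    rw [eWord_cons, ← mul_assoc]
    by_cases hab : a = b
    · subst hab
      conv_lhs => rw [mul_assoc, ih, mul_smul_comm, ← mul_assoc]
      rw [List.length_cons, List.count_cons_self]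
      congr 1
      ring
    · rw [egen_mul_egen_of_ne hQ hab, neg_mul, mul_assoc, ih, mul_smul_comm, ← mul_assoc,
        ← neg_smul, List.length_cons, List.count_cons_of_ne (Ne.symm hab)]
      congr 1
      ring

theorem eWord_mem_one_of_even_count (hQ : DiagQ Q) (L : List (Fin n))
    (hL : ∀ a, Even (L.count a)) : eWord Q L ∈ (1 : Submodule ℝ (CliffordAlgebra Q)) := by
  induction h : L.length using Nat.strong_induction_on generalizing L with
  | _ k ih =>
  match L, hL with
  | [], _ => exact Submodule.mem_one.mpr ⟨1, map_one _⟩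
  | a :: L', hL =>
    have ha : a ∈ L' := by
      have := hL a
      rw [List.count_cons_self, Nat.even_add_one] at this
      exact List.count_pos_iff.mp (Nat.pos_of_ne_zero fun h0 => this (h0 ▸ ⟨0, rfl⟩))
    obtain ⟨s, t, rfl⟩ := List.append_of_mem ha
    -- move the first `e_a` along `s` to its next occurrence, where the pair squares to `Q e_a`
    have hword : eWord Q (a :: (s ++ a :: t))
        = ((-1 : ℝ) ^ (s.length + s.count a) * Q (Pi.single a 1)) • eWord Q (s ++ t) := by
      rw [eWord_cons, eWord_append, eWord_cons, eWord_append, ← mul_assoc, egen_mul_eWord hQ,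
        smul_mul_assoc, mul_assoc, ← mul_assoc (egen Q a), egen_mul_egen_self, Algebra.left_comm,
        ← Algebra.smul_def, smul_smul]
    rw [hword]
    refine Submodule.smul_mem _ _ (ih _ ?_ _ (fun b => ?_) rfl)
    · simp only [List.length_append, List.length_cons] at h ⊢
      omega
    · have := hL b
      by_cases hb : b = a
      · subst hb
        simpa [List.count_append, Nat.even_add_one, ← add_assoc] using this
      · simpa [List.count_append, List.count_cons_of_ne (Ne.symm hb)] using this

variable (Q) in
def twistedConj (a : Fin n) : Module.End ℝ (CliffordAlgebra Q) :=
  (Q (Pi.single a 1))⁻¹ • (LinearMap.mulLeft ℝ (egen Q a) ∘ₗ LinearMap.mulRight ℝ (egen Q a) ∘ₗ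
    (involute (Q := Q)).toLinearMap)

theorem twistedConj_apply (a : Fin n) (x : CliffordAlgebra Q) :
    twistedConj Q a x = (Q (Pi.single a 1))⁻¹ • (egen Q a * (involute x * egen Q a)) := rfl

theorem twistedConj_eWord (hQ : DiagQ Q) (a : Fin n) (L : List (Fin n)) :
    twistedConj Q a (eWord Q L) = (-1 : ℝ) ^ L.count a • eWord Q L := by
  rw [twistedConj_apply, involute_eWord, smul_mul_assoc, mul_smul_comm, ← mul_assoc,
    egen_mul_eWord hQ, smul_mul_assoc, mul_assoc, egen_mul_egen_self, ← Algebra.commutes,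
    ← Algebra.smul_def, smul_smul, smul_smul, smul_smul]
  congr 1
  field_simp [hQ.apply_single_ne_zero a]
  rw [← pow_add, ← add_assoc, ← two_mul, pow_add, pow_mul, neg_one_sq, one_pow, one_mul]

theorem twistedConj_of_mem_center (hQ : DiagQ Q) (a : Fin n) {x : CliffordAlgebra Q}
    (hx : x ∈ Subalgebra.center ℝ (CliffordAlgebra Q)) (hα : involute x = x) :
    twistedConj Q a x = x := by
  rw [twistedConj_apply, hα, ← Subalgebra.mem_center_iff.mp hx, ← mul_assoc, egen_mul_egen_self,
    ← Algebra.smul_def, inv_smul_smul₀ (hQ.apply_single_ne_zero a)]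

variable (Q) in
def parityProj (a : Fin n) : Module.End ℝ (CliffordAlgebra Q) :=
  (2 : ℝ)⁻¹ • (1 + twistedConj Q a)

theorem parityProj_apply (a : Fin n) (x : CliffordAlgebra Q) :
    parityProj Q a x = (2 : ℝ)⁻¹ • (x + twistedConj Q a x) := rfl

theorem parityProj_eWord (hQ : DiagQ Q) (a : Fin n) (L : List (Fin n)) :
    parityProj Q a (eWord Q L) = if Even (L.count a) then eWord Q L else 0 := by
  rw [parityProj_apply, twistedConj_eWord hQ]
  split_ifs with h
  · rw [h.neg_one_pow, one_smul, ← two_smul ℝ, inv_smul_smul₀ two_ne_zero]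
  · rw [(Nat.not_even_iff_odd.mp h).neg_one_pow, neg_one_smul, add_neg_cancel, smul_zero]

theorem parityProj_of_mem_center (hQ : DiagQ Q) (a : Fin n) {x : CliffordAlgebra Q}
    (hx : x ∈ Subalgebra.center ℝ (CliffordAlgebra Q)) (hα : involute x = x) :
    parityProj Q a x = x := by
  rw [parityProj_apply, twistedConj_of_mem_center hQ a hx hα, ← two_smul ℝ,
    inv_smul_smul₀ two_ne_zero]

theorem prod_parityProj_eWord (hQ : DiagQ Q) (l L : List (Fin n)) :
    (l.map (parityProj Q)).prod (eWord Q L) =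
      if ∀ a ∈ l, Even (L.count a) then eWord Q L else 0 := by
  induction l with
  | nil => simp
  | cons a l ih =>
    rw [List.map_cons, List.prod_cons, Module.End.mul_apply, ih]
    simp only [List.forall_mem_cons]
    by_cases hl : ∀ b ∈ l, Even (L.count b)
    · rw [if_pos hl, parityProj_eWord hQ]
      simp only [and_iff_left hl]
    · rw [if_neg hl, map_zero, if_neg fun h => hl h.2]

theorem prod_parityProj_of_mem_center (hQ : DiagQ Q) (l : List (Fin n)) {x : CliffordAlgebra Q}
    (hx : x ∈ Subalgebra.center ℝ (CliffordAlgebra Q)) (hα : involute x = x) :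
    (l.map (parityProj Q)).prod x = x := by
  induction l with
  | nil => rfl
  | cons a l ih =>
    rw [List.map_cons, List.prod_cons, Module.End.mul_apply, ih,
      parityProj_of_mem_center hQ a hx hα]

theorem range_prod_parityProj_le_one (hQ : DiagQ Q) :
    LinearMap.range ((List.finRange n).map (parityProj Q)).prod ≤ 1 := by
  rw [LinearMap.range_eq_map, ← span_range_eWord, Submodule.map_span_le]
  rintro _ ⟨L, rfl⟩
  rw [prod_parityProj_eWord hQ]
  split_ifs with h
  · exact eWord_mem_one_of_even_count hQ L fun a => h a (List.mem_finRange a)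
  · exact Submodule.zero_mem _

theorem mem_one_of_mem_center_of_involute_eq (hQ : DiagQ Q) {x : CliffordAlgebra Q}
    (hx : x ∈ Subalgebra.center ℝ (CliffordAlgebra Q)) (hα : involute x = x) :
    x ∈ (1 : Submodule ℝ (CliffordAlgebra Q)) :=
  prod_parityProj_of_mem_center hQ _ hx hα ▸ range_prod_parityProj_le_one hQ ⟨x, rfl⟩

theorem mem_Pset_of_mul_mem_center {T u : CliffordAlgebra Q} (hT : IsUnit T)
    (hu : u ∈ Subalgebra.center ℝ (CliffordAlgebra Q)) (hu' : IsUnit u)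
    (h : T * u ∈ evenOdd Q 0 ∨ T * u ∈ evenOdd Q 1) : T ∈ Pset Q := by
  obtain ⟨u, rfl⟩ := hu'
  have hinv : ↑u⁻¹ ∈ Subalgebra.center ℝ (CliffordAlgebra Q) := Set.units_inv_mem_center hu
  refine ⟨↑u⁻¹, T * u, hinv, u⁻¹.isUnit, h, hT.mul u.isUnit, ?_⟩
  rw [← Subalgebra.mem_center_iff.mp hinv, mul_assoc, Units.mul_inv, mul_one]

theorem mem_Pset_of_involute_eq_mul (hQ : DiagQ Q) (T c : (CliffordAlgebra Q)ˣ)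
    (hc : ↑c ∈ Subalgebra.center ℝ (CliffordAlgebra Q))
    (hcα : involute (c : CliffordAlgebra Q) = ↑c⁻¹)
    (hTc : involute (T : CliffordAlgebra Q) = ↑T * ↑c) : ↑T ∈ Pset Q := by
  have hc' : ↑c⁻¹ ∈ Subalgebra.center ℝ (CliffordAlgebra Q) := Set.units_inv_mem_center hc
  obtain ⟨μ, hμ⟩ := Submodule.mem_one.mp <| mem_one_of_mem_center_of_involute_eq hQ
    (add_mem hc hc') (by rw [map_add, hcα, ← hcα, involute_involute, add_comm])
  have hplus : (1 + ↑c) * (1 + ↑c⁻¹) = algebraMap ℝ (CliffordAlgebra Q) (2 + μ) := by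
    rw [map_add, hμ, map_ofNat, mul_add, add_mul, add_mul, Units.mul_inv, one_mul, mul_one, one_mul,
      ← one_add_one_eq_two]
    abel
  have hminus : (1 - ↑c) * (1 - ↑c⁻¹) = algebraMap ℝ (CliffordAlgebra Q) (2 - μ) := by
    rw [map_sub, hμ, map_ofNat, mul_sub, sub_mul, sub_mul, Units.mul_inv, one_mul, mul_one, one_mul,
      ← one_add_one_eq_two]
    abel
  rcases (show 2 + μ ≠ 0 ∨ 2 - μ ≠ 0 by by_contra! h; linarith) with h | h
  · refine mem_Pset_of_mul_mem_center T.isUnit (add_mem (one_mem _) hc)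
      (isUnit_of_mul_eq_algebraMap (Subalgebra.mem_center_iff.mp (add_mem (one_mem _) hc') _)
        h hplus) (Or.inl ?_)
    rw [mem_evenOdd_zero_iff, mul_add, mul_one, ← hTc, map_add, involute_involute, add_comm]
  · refine mem_Pset_of_mul_mem_center T.isUnit (sub_mem (one_mem _) hc)
      (isUnit_of_mul_eq_algebraMap (Subalgebra.mem_center_iff.mp (sub_mem (one_mem _) hc') _)
        h hminus) (Or.inr ?_)
    rw [mem_evenOdd_one_iff, mul_sub, mul_one, ← hTc, map_sub, involute_involute, neg_sub]

theorem mem_Pset_of_conj_mem_evenOdd_one (hQ : DiagQ Q) (hn : 0 < n) (T : (CliffordAlgebra Q)ˣ)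
    (h : ∀ U ∈ evenOdd Q 1, ↑T * U * ↑T⁻¹ ∈ evenOdd Q 1) : ↑T ∈ Pset Q := by
  obtain ⟨g, hg⟩ : IsUnit (egen Q ⟨0, hn⟩) :=
    isUnit_ι_of_isUnit Q (hQ.apply_single_ne_zero _).isUnit
  have hα := involute_conj (fun x => conj_mem_evenOdd_zero_of_conj_odd
    (hg ▸ ι_mem_evenOdd_one Q (Pi.single _ 1) : ↑g ∈ evenOdd Q 1) h) h
  set Tα := Units.map (involute (Q := Q) : CliffordAlgebra Q →* CliffordAlgebra Q) T
  refine mem_Pset_of_involute_eq_mul hQ T (T⁻¹ * Tα) (inv_mul_mem_center_of_conj_eq fun z => ?_)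
    ?_ (by simp [Tα])
  · simpa [Tα, involute_involute] using hα (involute z)
  · simp [Tα, mul_inv_rev]

theorem conj_mem_evenOdd_one_of_mem_Pset {T : (CliffordAlgebra Q)ˣ} (hT : ↑T ∈ Pset Q)
    {U : CliffordAlgebra Q} (hU : U ∈ evenOdd Q 1) : ↑T * U * ↑T⁻¹ ∈ evenOdd Q 1 := by
  obtain ⟨_, _, hw, ⟨w, rfl⟩, ht, ⟨t, rfl⟩, hT⟩ := hT
  obtain rfl : T = w * t := Units.ext hT
  have : ↑(w * t) * U * ↑(w * t)⁻¹ = ↑w * (↑t * U * ↑t⁻¹) * ↑w⁻¹ := by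
    simp [mul_assoc]
  rw [this, ← Subalgebra.mem_center_iff.mp hw, mul_assoc, Units.mul_inv, mul_one]
  rcases ht with ht | ht <;> exact conj_mem_graded_of_mem _ ht hU

end CliffordWords

/-- `Γ^{(1)} = Z^× (C^{×(0)} ∪ C^{×(1)})`. -/
theorem stmt4 (hQ : DiagQ Q) (hn : 2 ≤ n) (T : (CliffordAlgebra Q)ˣ) :
    (∀ U ∈ evenOdd Q 1,
        (↑T : CliffordAlgebra Q) * U * (↑T⁻¹ : CliffordAlgebra Q) ∈ evenOdd Q 1) ↔
      (↑T : CliffordAlgebra Q) ∈ Pset Q :=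
  ⟨mem_Pset_of_conj_mem_evenOdd_one hQ (by omega) T,
    fun hT _ => conj_mem_evenOdd_one_of_mem_Pset hT⟩
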